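/- Let L : [0,∞) → (0,∞) be continuously differentiable, T > 0, and let ψ(x,t) be a smooth solution of i∂ψ/∂t = -∂²ψ/∂x² on [-L(t/T)/2, L(t/T)/2] satisfying at both endpoints x = ±L(t/T)/2 the modified Robin condition ∂ψ/∂x(x,t) = ±i·(L'(t/T)/(4T))·ψ(x,t) (sign according to the outward direction). Then d/dt ∫_{-L(t/T)/2}^{L(t/T)/2} |ψ(x,t)|² dx = 0, i.e. the L² norm is conserved. -/

import Mathlib

open Real intervalIntegral MeasureTheory Metric

lemma hasDerivAt_normSq' {u : ℝ → ℂ} {d : ℂ} {s : ℝ} (h : HasDerivAt u d s) :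
    HasDerivAt (fun r => ‖u r‖ ^ 2) (2 * ((starRingEnd ℂ) (u s) * d).re) s := by
  have hre : HasDerivAt (fun r => (u r).re) d.re s :=
    (Complex.reCLM.hasFDerivAt.comp_hasDerivAt s h)
  have him : HasDerivAt (fun r => (u r).im) d.im s :=
    (Complex.imCLM.hasFDerivAt.comp_hasDerivAt s h)
  have h2 : HasDerivAt (fun r => (u r).re * (u r).re + (u r).im * (u r).im)
      (d.re * (u s).re + (u s).re * d.re + (d.im * (u s).im + (u s).im * d.im)) s :=
    (hre.mul hre).add (him.mul him)
  have : (fun r => (u r).re * (u r).re + (u r).im * (u r).im) = fun r => ‖u r‖ ^ 2 := by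
    funext r
    rw [← Complex.normSq_apply, Complex.sq_norm]
  rw [this] at h2
  convert h2 using 1
  simp [Complex.mul_re]
  ring

lemma abs_sub_le_of_uIoc {e0 v x : ℝ} (hx : x ∈ Set.uIoc e0 v) : |x - e0| ≤ |v - e0| := by
  have hx' : x ∈ Set.uIcc e0 v := Set.uIoc_subset_uIcc hx
  rcases le_total e0 v with h | h
  · rw [Set.uIcc_of_le h] at hx'
    rw [abs_of_nonneg (by linarith [hx'.1]), abs_of_nonneg (by linarith)]
    linarith [hx'.2]
  · rw [Set.uIcc_of_ge h] at hx'
    rw [abs_of_nonpos (by linarith [hx'.2]), abs_of_nonpos (by linarith)]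
    linarith [hx'.1]

lemma endpoint_piece {f : ℝ → ℝ → ℝ} {e0 t0 e' : ℝ}
    (hf : ContDiffAt ℝ 1 (fun p : ℝ × ℝ => f p.1 p.2) (e0, t0))
    (hfc : Continuous fun p : ℝ × ℝ => f p.1 p.2)
    {e : ℝ → ℝ} (he : HasDerivAt e e' t0) (he0 : e t0 = e0) :
    HasDerivAt (fun s => ∫ x in e0..(e s), f x s) (f e0 t0 * e') t0 := by
  have hcx : ∀ s : ℝ, Continuous fun x => f x s := fun s =>
    hfc.comp (continuous_id.prodMk continuous_const)
  have h1 : HasDerivAt (fun s => ∫ x in e0..(e s), f x t0) (f e0 t0 * e') t0 := by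
    have hinner : HasDerivAt (fun v => ∫ x in e0..v, f x t0) (f e0 t0) e0 :=
      intervalIntegral.integral_hasDerivAt_right ((hcx t0).intervalIntegrable _ _)
        ((hcx t0).stronglyMeasurableAtFilter _ _) (hcx t0).continuousAt
    have := HasDerivAt.comp t0 (show HasDerivAt (fun v => ∫ x in e0..v, f x t0)
      (f e0 t0) (e t0) by rw [he0]; exact hinner) he
    exact this
  have h2 : HasDerivAt (fun s => ∫ x in e0..(e s), (f x s - f x t0)) 0 t0 := by
    rw [hasDerivAt_iff_isLittleO]
    have hzero : (∫ x in e0..(e t0), (f x t0 - f x t0)) = 0 := by simp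
    rw [Asymptotics.isLittleO_iff]
    intro ε hε
    obtain ⟨K, U, hU, hlip⟩ := hf.exists_lipschitzOnWith
    obtain ⟨δ, hδ, hball⟩ := Metric.mem_nhds_iff.1 hU
    have hec : ContinuousAt e t0 := he.continuousAt
    have hev1 : ∀ᶠ s in nhds t0, |e s - e0| < δ / 2 := by
      have := hec.tendsto
      rw [Metric.tendsto_nhds] at this
      filter_upwards [this (δ / 2) (by linarith)] with s hs
      rw [Real.dist_eq, he0] at hs; exact hs
    have hev2 : ∀ᶠ s in nhds t0, |e s - e0| ≤ ε / (K + 1) := by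
      have := hec.tendsto
      rw [Metric.tendsto_nhds] at this
      have hpos : (0:ℝ) < ε / (K + 1) := by positivity
      filter_upwards [this _ hpos] with s hs
      rw [Real.dist_eq, he0] at hs; exact le_of_lt hs
    have hev3 : ∀ᶠ s in nhds t0, |s - t0| < δ / 2 := by
      have : Metric.ball t0 (δ/2) ∈ nhds t0 := Metric.ball_mem_nhds _ (by linarith)
      filter_upwards [this] with s hs
      rw [Metric.mem_ball, Real.dist_eq] at hs; exact hs
    filter_upwards [hev1, hev2, hev3] with s hs1 hs2 hs3
    simp only [hzero, sub_zero, smul_zero, zero_smul]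
    have hbound : ∀ x ∈ Set.uIoc e0 (e s), ‖f x s - f x t0‖ ≤ K * |s - t0| := by
      intro x hx
      have hxe : |x - e0| ≤ |e s - e0| := abs_sub_le_of_uIoc hx
      have hm1 : ((x, s) : ℝ × ℝ) ∈ U := by
        apply hball
        simp only [Metric.mem_ball, Prod.dist_eq, Real.dist_eq]
        exact max_lt (by linarith [hxe]) (by linarith)
      have hm2 : ((x, t0) : ℝ × ℝ) ∈ U := by
        apply hball
        simp only [Metric.mem_ball, Prod.dist_eq, Real.dist_eq]
        exact max_lt (by linarith [hxe]) (by simpa using hδ)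
      have := hlip.dist_le_mul (x, s) hm1 (x, t0) hm2
      simp only [Prod.dist_eq, Real.dist_eq, sub_self, abs_zero] at this
      rw [Real.norm_eq_abs]
      calc |f x s - f x t0| ≤ K * max 0 |s - t0| := this
        _ = K * |s - t0| := by rw [max_eq_right (abs_nonneg _)]
    have hle := intervalIntegral.norm_integral_le_of_norm_le_const hbound
    calc ‖∫ x in e0..(e s), (f x s - f x t0)‖
        ≤ K * |s - t0| * |e s - e0| := hle
      _ ≤ K * |s - t0| * (ε / (K + 1)) := by
          apply mul_le_mul_of_nonneg_left hs2 (by positivity)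
      _ ≤ ε * |s - t0| := by
          rw [show (K:ℝ) * |s - t0| * (ε / (K + 1)) = (K / (K+1)) * (ε * |s - t0|) by ring]
          have hK1 : (K:ℝ) / (K + 1) ≤ 1 := by
            rw [div_le_one (by positivity)]; linarith [K.coe_nonneg]
          nlinarith [abs_nonneg (s - t0), le_of_lt hε, mul_nonneg (le_of_lt hε) (abs_nonneg (s-t0))]
      _ ≤ ε * ‖s - t0‖ := by rw [Real.norm_eq_abs]
  have heq : (fun s => ∫ x in e0..(e s), f x s)
      = fun s => (∫ x in e0..(e s), f x t0) + ∫ x in e0..(e s), (f x s - f x t0) := by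
    funext s
    rw [← intervalIntegral.integral_add (f := fun x => f x t0) (g := fun x => f x s - f x t0) ((hcx t0).intervalIntegrable _ _)
      (((hcx s).sub (hcx t0)).intervalIntegrable _ _)]
    simp
  rw [heq]
  simpa using h1.fun_add h2

/-- With the modified Robin (magnetic) boundary conditions
`∂ψ/∂x = ±i·L'(t/T)/(4T)·ψ` at the moving endpoints, the L² norm is conserved. -/
theorem norm_conserved_modified_robin
    (L : ℝ → ℝ) (hLpos : ∀ t, 0 ≤ t → 0 < L t) (hL : ContDiff ℝ 1 L)
    (T : ℝ) (hT : 0 < T)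
    (ψ : ℝ → ℝ → ℂ)
    (hψ : ContDiff ℝ (⊤ : ℕ∞) (fun p : ℝ × ℝ => ψ p.1 p.2))
    (hSch : ∀ t, 0 ≤ t → ∀ x ∈ Set.Icc (-(L (t / T)) / 2) (L (t / T) / 2),
      Complex.I * deriv (fun s => ψ x s) t = - deriv (deriv (fun y => ψ y t)) x)
    (hRobR : ∀ t, 0 ≤ t →
      deriv (fun y => ψ y t) (L (t / T) / 2)
        = Complex.I * (deriv L (t / T) / (4 * T)) * ψ (L (t / T) / 2) t)
    (hRobL : ∀ t, 0 ≤ t →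
      deriv (fun y => ψ y t) (-(L (t / T)) / 2)
        = - (Complex.I * (deriv L (t / T) / (4 * T)) * ψ (-(L (t / T)) / 2) t)) :
    ∀ t, 0 ≤ t →
      HasDerivAt (fun s => ∫ x in (-(L (s / T)) / 2)..(L (s / T) / 2), ‖ψ x s‖ ^ 2) 0 t := by
  intro t0 ht0
  have hT' : T ≠ 0 := ne_of_gt hT
  set τ : ℝ := t0 / T with hτdef
  have hτ0 : 0 ≤ τ := div_nonneg ht0 (le_of_lt hT)
  set A0 : ℝ := -(L τ) / 2 with hA0def
  set B0 : ℝ := L τ / 2 with hB0def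
  have hAB : A0 ≤ B0 := by
    have := hLpos τ hτ0
    rw [hA0def, hB0def]; linarith
  -- joint smoothness at level ∞
  have hΨ : ContDiff ℝ ((⊤:ℕ∞):WithTop ℕ∞) (fun p : ℝ × ℝ => ψ p.1 p.2) := hψ.of_le (by simp)
  have hΨc : Continuous fun p : ℝ × ℝ => ψ p.1 p.2 := hΨ.continuous
  have hfc : Continuous fun p : ℝ × ℝ => ‖ψ p.1 p.2‖ ^ 2 := (hΨc.norm).pow 2
  have hfC : ContDiff ℝ ((⊤:ℕ∞):WithTop ℕ∞) (fun p : ℝ × ℝ => ‖ψ p.1 p.2‖ ^ 2) := by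
    have h1 : ContDiff ℝ ((⊤:ℕ∞):WithTop ℕ∞)
        (fun p : ℝ × ℝ => (ψ p.1 p.2).re * (ψ p.1 p.2).re + (ψ p.1 p.2).im * (ψ p.1 p.2).im) := by
      have hre := Complex.reCLM.contDiff.comp hΨ
      have him := Complex.imCLM.contDiff.comp hΨ
      exact (hre.mul hre).add (him.mul him)
    have : (fun p : ℝ × ℝ => (ψ p.1 p.2).re * (ψ p.1 p.2).re + (ψ p.1 p.2).im * (ψ p.1 p.2).im)
        = fun p : ℝ × ℝ => ‖ψ p.1 p.2‖ ^ 2 := by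
      funext p
      rw [← Complex.normSq_apply, Complex.sq_norm]
    rwa [this] at h1
  -- time-slice derivative
  have hslice : ∀ x s : ℝ, HasDerivAt (fun r => ψ x r)
      (fderiv ℝ (fun p : ℝ × ℝ => ψ p.1 p.2) (x, s) (0, 1)) s := by
    intro x s
    have h1 : HasFDerivAt (fun p : ℝ × ℝ => ψ p.1 p.2)
        (fderiv ℝ (fun p : ℝ × ℝ => ψ p.1 p.2) (x, s)) (x, s) :=
      (hΨ.differentiable (by simp) (x, s)).hasFDerivAt
    have h2 : HasDerivAt (fun r : ℝ => ((x, r) : ℝ × ℝ)) ((0 : ℝ), (1 : ℝ)) s :=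
      (hasDerivAt_const s x).prodMk (hasDerivAt_id s)
    exact h1.comp_hasDerivAt s h2
  -- F' : time derivative of the density
  set F' : ℝ → ℝ → ℝ := fun x s =>
    2 * ((starRingEnd ℂ) (ψ x s) * fderiv ℝ (fun p : ℝ × ℝ => ψ p.1 p.2) (x, s) (0, 1)).re
    with hF'def
  have hdc : Continuous fun p : ℝ × ℝ => fderiv ℝ (fun q : ℝ × ℝ => ψ q.1 q.2) p ((0:ℝ), (1:ℝ)) :=
    (hΨ.continuous_fderiv (by simp)).clm_apply continuous_const
  have hF'c : Continuous fun p : ℝ × ℝ => F' p.1 p.2 := by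
    apply Continuous.mul continuous_const
    exact Complex.continuous_re.comp ((continuous_star.comp hΨc).mul hdc)
  have hF'deriv : ∀ x s : ℝ, HasDerivAt (fun r => ‖ψ x r‖ ^ 2) (F' x s) s := fun x s =>
    hasDerivAt_normSq' (hslice x s)
  -- B-part : differentiation under the integral sign
  have hB : HasDerivAt (fun s => ∫ x in A0..B0, ‖ψ x s‖ ^ 2) (∫ x in A0..B0, F' x t0) t0 := by
    obtain ⟨M, hM⟩ := ((isCompact_uIcc (a := A0) (b := B0)).prod
      (isCompact_closedBall t0 1)).exists_bound_of_continuousOn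
      (hF'c.continuousOn (s := Set.uIcc A0 B0 ×ˢ Metric.closedBall t0 1))
    refine (intervalIntegral.hasDerivAt_integral_of_dominated_loc_of_deriv_le
      (F := fun s x => ‖ψ x s‖ ^ 2) (F' := fun s x => F' x s) (x₀ := t0)
      (bound := fun _ => M) (s := Metric.ball t0 1) (Metric.ball_mem_nhds t0 one_pos) ?_ ?_ ?_ ?_ ?_ ?_).2
    · exact Filter.Eventually.of_forall fun s =>
        ((hfc.comp (continuous_id.prodMk continuous_const)).aestronglyMeasurable)
    · exact (hfc.comp (continuous_id.prodMk continuous_const)).intervalIntegrable _ _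
    · exact ((hF'c.comp (continuous_id.prodMk continuous_const)).aestronglyMeasurable)
    · refine Filter.Eventually.of_forall fun x hx => fun s hs => ?_
      exact hM (x, s) ⟨Set.uIoc_subset_uIcc hx, Metric.ball_subset_closedBall hs⟩
    · exact intervalIntegrable_const
    · exact Filter.Eventually.of_forall fun x _ s _ => hF'deriv x s
  -- spatial function φ and its derivatives
  set φ : ℝ → ℂ := fun y => ψ y t0 with hφdef
  have hφ : ContDiff ℝ ((⊤:ℕ∞):WithTop ℕ∞) φ :=
    hΨ.comp ((contDiff_id (E := ℝ)).prodMk contDiff_const)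
  have hφ' : ContDiff ℝ ((⊤:ℕ∞):WithTop ℕ∞) (deriv φ) := (contDiff_infty_iff_deriv.1 hφ).2
  have hφd : ∀ y, HasDerivAt φ (deriv φ y) y := fun y => (hφ.differentiable (by simp) y).hasDerivAt
  have hφd2 : ∀ y, HasDerivAt (deriv φ) (deriv (deriv φ) y) y := fun y =>
    (hφ'.differentiable (by simp) y).hasDerivAt
  -- the current g
  set g : ℝ → ℝ := fun x => -2 * ((φ x).re * (deriv φ x).im - (φ x).im * (deriv φ x).re)
    with hgdef
  have hgderiv : ∀ x, HasDerivAt g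
      (-2 * ((φ x).re * (deriv (deriv φ) x).im - (φ x).im * (deriv (deriv φ) x).re)) x := by
    intro x
    have hre : HasDerivAt (fun y => (φ y).re) (deriv φ x).re x :=
      Complex.reCLM.hasFDerivAt.comp_hasDerivAt x (hφd x)
    have him : HasDerivAt (fun y => (φ y).im) (deriv φ x).im x :=
      Complex.imCLM.hasFDerivAt.comp_hasDerivAt x (hφd x)
    have hre' : HasDerivAt (fun y => (deriv φ y).re) (deriv (deriv φ) x).re x :=
      Complex.reCLM.hasFDerivAt.comp_hasDerivAt x (hφd2 x)
    have him' : HasDerivAt (fun y => (deriv φ y).im) (deriv (deriv φ) x).im x :=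
      Complex.imCLM.hasFDerivAt.comp_hasDerivAt x (hφd2 x)
    have h := (((hre.mul him').sub (him.mul hre'))).const_mul (-2 : ℝ)
    convert h using 1
    · rfl
    · rfl
    · rfl
    ring
  -- on the interval, F' x t0 equals g'
  have hd : ∀ x ∈ Set.uIcc A0 B0,
      fderiv ℝ (fun p : ℝ × ℝ => ψ p.1 p.2) (x, t0) (0, 1) = Complex.I * deriv (deriv φ) x := by
    intro x hx
    rw [Set.uIcc_of_le hAB] at hx
    have h1 := hSch t0 ht0 x hx
    have h2 : deriv (fun s => ψ x s) t0
        = fderiv ℝ (fun p : ℝ × ℝ => ψ p.1 p.2) (x, t0) (0, 1) := (hslice x t0).deriv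
    rw [h2] at h1
    have h3 : Complex.I * (Complex.I * deriv (deriv φ) x) = -deriv (deriv φ) x := by
      rw [← mul_assoc, Complex.I_mul_I]; ring
    exact mul_left_cancel₀ Complex.I_ne_zero (h1.trans h3.symm)
  have hgF : ∀ x ∈ Set.uIcc A0 B0, HasDerivAt g (F' x t0) x := by
    intro x hx
    have := hgderiv x
    convert this using 1
    rw [hF'def]
    simp only [hd x hx]
    have hψφ : ψ x t0 = φ x := rfl
    rw [hψφ]
    simp [Complex.mul_re, Complex.mul_im]
    ring
  -- value of the middle integral
  have hDB : (∫ x in A0..B0, F' x t0) = g B0 - g A0 := by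
    apply intervalIntegral.integral_eq_sub_of_hasDerivAt hgF
    exact (hF'c.comp (continuous_id.prodMk continuous_const)).intervalIntegrable _ _
  -- endpoint moving pieces
  have hLd : HasDerivAt (fun s : ℝ => L (s / T)) (deriv L τ * (1 / T)) t0 := by
    have h1 : HasDerivAt L (deriv L τ) (t0 / T) := (hL.differentiable one_ne_zero (t0 / T)).hasDerivAt
    have h2 : HasDerivAt (fun s : ℝ => s / T) (1 / T) t0 := (hasDerivAt_id t0).div_const T
    exact HasDerivAt.comp t0 h1 h2
  have hbfun : HasDerivAt (fun s : ℝ => L (s / T) / 2) (deriv L τ * (1 / T) / 2) t0 :=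
    hLd.div_const 2
  have hafun : HasDerivAt (fun s : ℝ => -(L (s / T)) / 2) (-(deriv L τ * (1 / T)) / 2) t0 :=
    hLd.neg.div_const 2
  have hC : HasDerivAt (fun s => ∫ x in B0..(L (s / T) / 2), ‖ψ x s‖ ^ 2)
      (‖ψ B0 t0‖ ^ 2 * (deriv L τ * (1 / T) / 2)) t0 :=
    endpoint_piece ((hfC.of_le (by exact_mod_cast le_top)).contDiffAt) hfc hbfun rfl
  have hA' : HasDerivAt (fun s => ∫ x in A0..(-(L (s / T)) / 2), ‖ψ x s‖ ^ 2)
      (‖ψ A0 t0‖ ^ 2 * (-(deriv L τ * (1 / T)) / 2)) t0 :=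
    endpoint_piece ((hfC.of_le (by exact_mod_cast le_top)).contDiffAt) hfc hafun rfl
  have hA : HasDerivAt (fun s => ∫ x in (-(L (s / T)) / 2)..A0, ‖ψ x s‖ ^ 2)
      (-(‖ψ A0 t0‖ ^ 2 * (-(deriv L τ * (1 / T)) / 2))) t0 := by
    have h := hA'.fun_neg
    convert h using 1
    · rfl
    · rfl
    funext s
    rw [intervalIntegral.integral_symm]
  -- assembly
  have hint : ∀ (u v : ℝ) (s : ℝ), IntervalIntegrable (fun x => ‖ψ x s‖ ^ 2) volume u v :=
    fun u v s => (hfc.comp (continuous_id.prodMk continuous_const)).intervalIntegrable _ _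
  have hfuneq : (fun s => ∫ x in (-(L (s / T)) / 2)..(L (s / T) / 2), ‖ψ x s‖ ^ 2)
      = fun s => ((∫ x in (-(L (s / T)) / 2)..A0, ‖ψ x s‖ ^ 2)
          + ∫ x in A0..B0, ‖ψ x s‖ ^ 2) + ∫ x in B0..(L (s / T) / 2), ‖ψ x s‖ ^ 2 := by
    funext s
    rw [intervalIntegral.integral_add_adjacent_intervals (hint _ _ s) (hint _ _ s),
      intervalIntegral.integral_add_adjacent_intervals (hint _ _ s) (hint _ _ s)]
  rw [hfuneq]
  have htotal := (hA.fun_add hB).fun_add hC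
  convert htotal using 1
  · rfl
  · rfl
  -- final computation : the total derivative vanishes
  rw [hDB]
  have hgB : g B0 = -2 * (deriv L τ / (4 * T)) * ‖ψ B0 t0‖ ^ 2 := by
    simp only [hgdef]
    have h1 : deriv φ B0 = Complex.I * ((deriv L τ / (4 * T) : ℝ) : ℂ) * φ B0 := by
      have h := hRobR t0 ht0
      have hc : ((deriv L τ / (4 * T) : ℝ) : ℂ) = ((deriv L (t0 / T) : ℝ) : ℂ) / (4 * (T : ℂ)) := by
        push_cast; ring
      rw [hc]; exact h
    rw [h1]
    have : ‖ψ B0 t0‖ ^ 2 = (φ B0).re * (φ B0).re + (φ B0).im * (φ B0).im := by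
      rw [← Complex.normSq_apply, Complex.sq_norm]
    rw [this]
    simp only [Complex.mul_re, Complex.mul_im, Complex.I_re, Complex.I_im,
      Complex.ofReal_re, Complex.ofReal_im, Complex.neg_re, Complex.neg_im]
    ring
  have hgA : g A0 = 2 * (deriv L τ / (4 * T)) * ‖ψ A0 t0‖ ^ 2 := by
    simp only [hgdef]
    have h1 : deriv φ A0 = -(Complex.I * ((deriv L τ / (4 * T) : ℝ) : ℂ) * φ A0) := by
      have h := hRobL t0 ht0
      have hc : ((deriv L τ / (4 * T) : ℝ) : ℂ) = ((deriv L (t0 / T) : ℝ) : ℂ) / (4 * (T : ℂ)) := by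
        push_cast; ring
      rw [hc]; exact h
    rw [h1]
    have : ‖ψ A0 t0‖ ^ 2 = (φ A0).re * (φ A0).re + (φ A0).im * (φ A0).im := by
      rw [← Complex.normSq_apply, Complex.sq_norm]
    rw [this]
    simp only [Complex.mul_re, Complex.mul_im, Complex.I_re, Complex.I_im,
      Complex.ofReal_re, Complex.ofReal_im, Complex.neg_re, Complex.neg_im]
    ring
  rw [hgB, hgA]
  have hψφB : ψ B0 t0 = φ B0 := rfl
  have hψφA : ψ A0 t0 = φ A0 := rfl
  field_simp
  ring
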